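/- arXiv:2507.10404 — 5 statements merged into one kernel-verified Lean document; each statement's English description precedes it below -/
import Mathlib

section
/- Let f : ℕ → ℝ be a probability mass function, let π : ℕ → [0,1], let ω ∈ (0,1], and let h be the one-inflated model built from f. Then the series φ = Σ_{k=1}^∞ π(k) f(k) and φ_e = Σ_{k=1}^∞ π(k) h(k) both converge, and φ_e = ω φ + (1−ω) π(1) (1 − f(0)). In particular, φ_e is an affine function of ω with slope φ − π(1)(1 − f(0)). -/
/-- The one-inflated model with inflation parameter `ω` built from a pmf `f` on `ℕ`. -/
noncomputable def oneInflated (f : ℕ → ℝ) (ω : ℝ) : ℕ → ℝ := fun k =>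
  if k = 0 then f 0
  else if k = 1 then (1 - ω) * (1 - f 0) + ω * f 1
  else ω * f k

theorem phi_e_affine_in_omega (f : ℕ → ℝ) (hf : ∀ k, 0 ≤ f k) (hfsum : Summable f)
    (hftot : ∑' k, f k = 1)
    (π : ℕ → ℝ) (hπ : ∀ k, π k ∈ Set.Icc (0 : ℝ) 1)
    (ω : ℝ) (hω : ω ∈ Set.Ioc (0 : ℝ) 1) :
    Summable (fun k => π (k + 1) * f (k + 1)) ∧
      Summable (fun k => π (k + 1) * oneInflated f ω (k + 1)) ∧
      ∑' k, π (k + 1) * oneInflated f ω (k + 1)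
        = ω * (∑' k, π (k + 1) * f (k + 1)) + (1 - ω) * π 1 * (1 - f 0) := by
  have hfs : Summable (fun k => f (k + 1)) := hfsum.comp_injective (add_left_injective 1)
  have hφ : Summable (fun k => π (k + 1) * f (k + 1)) := by
    apply Summable.of_nonneg_of_le (fun k => mul_nonneg (hπ (k+1)).1 (hf (k+1)))
      (fun k => ?_) hfs
    calc π (k+1) * f (k+1) ≤ 1 * f (k+1) := by
          exact mul_le_mul_of_nonneg_right (hπ (k+1)).2 (hf (k+1))
      _ = f (k+1) := one_mul _
  have key : (fun k => π (k + 1) * oneInflated f ω (k + 1))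
      = fun k => ω * (π (k + 1) * f (k + 1))
        + (if k = 0 then (1 - ω) * π 1 * (1 - f 0) else 0) := by
    funext k
    cases k with
    | zero => simp [oneInflated]; ring
    | succ n => simp [oneInflated, Nat.succ_ne_zero]; ring
  have hsingle : Summable (fun k : ℕ => if k = 0 then (1 - ω) * π 1 * (1 - f 0) else 0) := by
    apply summable_of_finite_support
    apply Set.Finite.subset (Set.finite_singleton 0)
    intro x hx
    by_contra h
    simp [Function.mem_support] at hx
    exact h (Set.mem_singleton_iff.mpr hx.1)
  have hsum2 : Summable (fun k => ω * (π (k + 1) * f (k + 1))) := hφ.mul_left ω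
  refine ⟨hφ, ?_, ?_⟩
  · rw [key]; exact hsum2.add hsingle
  · have h2 : ∑' k : ℕ, (if k = 0 then (1 - ω) * π 1 * (1 - f 0) else 0)
        = (1 - ω) * π 1 * (1 - f 0) := by
      rw [tsum_eq_single 0 (by intro b hb; simp [hb])]; simp
    rw [key, Summable.tsum_add hsum2 hsingle, tsum_mul_left, h2]
end

section
/- On a probability space let Z be a random covariate vector taking values z = (1, xᵀ, yᵀ)ᵀ, let D be an ℕ-valued random variable whose conditional distribution given Z = z is the one-inflated model h(·, z; β, ω) built from a family of probability mass functions f(·, z; β) with inflation parameter ω ∈ (0,1], and let R be a {0,1}-valued random variable with P(R = 1 | X = x, Y = y, D = k) = π(x, k), where π takes values in [0,1] (missing at random). Set φ(z) = Σ_{k=1}^∞ π(x,k) f(k, z; β), and suppose f(1, z; β) > 0 and φ(z) > 0 for all z. Then the conditional expectation E[ R·I(D>0)·π(X,1)/φ(Z) − R·I(D=1)/f(1, Z; β) | Z = z ] equals (1−ω)(1 − f(0, z; β)) π(x,1) { π(x,1)/φ(z) − 1/f(1, z; β) }, and this quantity is ≤ 0. -/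
open MeasureTheory ProbabilityTheory
open scoped ProbabilityTheory

/-!
Conditionally on `Z = z`, the event `{D = k, R = 1}` has probability `π k * h k`, where `h` is
the one-inflated pmf. Summing over `k ≥ 1`, the one-inflation only adds the mass
`(1 - ω)(1 - f 0)` at `k = 1`, so `E[R·I(D > 0)] = π 1 (1 - ω)(1 - f 0) + ω φ` and
`E[R·I(D = 1)] = π 1 ((1 - ω)(1 - f 0) + ω f 1)`. In the score the two `ω`-terms cancel
(`ω φ · π 1 / φ = ω f 1 · π 1 / f 1`), leaving the stated value. It is `≤ 0` because
`φ ≥ π 1 f 1`.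
-/

lemma oneInflated_nonneg {f : ℕ → ℝ} {ω : ℝ} (hf : ∀ k, 0 ≤ f k) (hf0 : f 0 ≤ 1)
    (hω : ω ∈ Set.Icc (0 : ℝ) 1) (k : ℕ) : 0 ≤ oneInflated f ω k := by
  obtain ⟨hω0, hω1⟩ := hω
  rcases k with _ | _ | k
  · simpa [oneInflated] using hf 0
  · show 0 ≤ (1 - ω) * (1 - f 0) + ω * f 1
    nlinarith [hf 1]
  · simpa [oneInflated] using mul_nonneg hω0 (hf _)

lemma hasSum_mul_oneInflated_succ {f w : ℕ → ℝ} (ω : ℝ) {s : ℝ}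
    (hs : HasSum (fun k => w (k + 1) * f (k + 1)) s) :
    HasSum (fun k => w (k + 1) * oneInflated f ω (k + 1))
      (w 1 * ((1 - ω) * (1 - f 0)) + ω * s) := by
  refine ((hasSum_ite_eq 0 (w 1 * ((1 - ω) * (1 - f 0)))).add (hs.mul_left ω)).congr_fun ?_
  rintro (_ | k) <;> simp [oneInflated] <;> ring

noncomputable def scoreWeight (c₁ c₂ : ℝ) (k : ℕ) : ℝ :=
  (if 0 < k then 1 else 0) * c₁ - (if k = 1 then 1 else 0) * c₂

lemma abs_scoreWeight_le (c₁ c₂ : ℝ) (k : ℕ) : |scoreWeight c₁ c₂ k| ≤ |c₁| + |c₂| := by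
  unfold scoreWeight
  split_ifs <;>
    simp only [one_mul, zero_mul, sub_zero, zero_sub, abs_neg, abs_zero] <;>
    linarith [abs_sub c₁ c₂, abs_nonneg c₁, abs_nonneg c₂]

lemma tsum_mul_scoreWeight {q : ℕ → ℝ} {s : ℝ} (c₁ c₂ : ℝ)
    (hq : HasSum (fun k => q (k + 1)) s) :
    ∑' k, q k * scoreWeight c₁ c₂ k = s * c₁ - q 1 * c₂ := by
  have hsucc : HasSum (fun k => q (k + 1) * scoreWeight c₁ c₂ (k + 1)) (s * c₁ - q 1 * c₂) := by
    refine ((hq.mul_right c₁).sub (hasSum_ite_eq 0 (q 1 * c₂))).congr_fun ?_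
    rintro (_ | k) <;> simp [scoreWeight, mul_sub]
  have hsum : Summable fun k => q k * scoreWeight c₁ c₂ k :=
    (summable_nat_add_iff (f := fun k => q k * scoreWeight c₁ c₂ k) 1).mp hsucc.summable
  rw [hsum.tsum_eq_zero_add, hsucc.tsum_eq]
  simp [scoreWeight]

section Conditioning

variable {Ω : Type*} [MeasurableSpace Ω]

lemma cond_inter_eq_mul {μ : Measure Ω} {s t u : Set Ω} {c : ENNReal}
    (ht : MeasurableSet t) (hu : MeasurableSet u) (h : μ (s ∩ t ∩ u) = c * μ (s ∩ t)) :
    μ[t ∩ u | s] = c * μ[t | s] := by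
  rw [cond_apply' (ht.inter hu), cond_apply' ht, ← Set.inter_assoc, h, mul_left_comm]

lemma integral_mul_comp_eq_tsum {μ : Measure Ω} [IsFiniteMeasure μ] {R : Ω → ℝ} {D : Ω → ℕ}
    (hR : ∀ a, R a = 0 ∨ R a = 1) (hRm : Measurable R) (hDm : Measurable D)
    {g : ℕ → ℝ} {C : ℝ} (hg : ∀ k, |g k| ≤ C) :
    ∫ a, R a * g (D a) ∂μ = ∑' k, μ.real ({a | D a = k} ∩ {a | R a = 1}) * g k := by
  have hE : MeasurableSet {a | R a = 1} := hRm (measurableSet_singleton 1)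
  have hind : (fun a => R a * g (D a)) = {a | R a = 1}.indicator (fun a => g (D a)) := by
    funext a
    rcases hR a with h | h <;> simp [h]
  have hgi : Integrable g ((μ.restrict {a | R a = 1}).map D) :=
    Integrable.of_bound (measurable_of_countable g).aestronglyMeasurable C
      (Filter.Eventually.of_forall fun k => (Real.norm_eq_abs (g k)).symm ▸ hg k)
  rw [hind, integral_indicator hE, ← integral_map hDm.aemeasurable hgi.aestronglyMeasurable,
    integral_countable hgi]
  congr with k
  have hDk : MeasurableSet (D ⁻¹' {k}) := hDm (measurableSet_singleton k)
  rw [map_measureReal_apply hDm (measurableSet_singleton k), measureReal_restrict_apply hDk,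
    smul_eq_mul]
  rfl

end Conditioning

/-- `f` is the pmf `f(·, z; β)` at the fixed covariate value `z`, and `π k = π(x, k)` with `x`
the fully observed part of `z`. -/
theorem score_cond_expectation_given_z_general
    {Ω : Type*} [MeasurableSpace Ω] (P : Measure Ω)
    {ζ : Type*} (z : ζ)
    (f : ℕ → ℝ) (hf : ∀ k, 0 ≤ f k) (hfsum : Summable f) (hftot : ∑' k, f k = 1)
    (π : ℕ → ℝ) (hπ : ∀ k, π k ∈ Set.Icc (0 : ℝ) 1)
    (ω : ℝ) (hω : ω ∈ Set.Ioc (0 : ℝ) 1)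
    (Z : Ω → ζ) (D : Ω → ℕ) (R : Ω → ℝ)
    (hDm : Measurable D) (hRm : Measurable R)
    (hR01 : ∀ a, R a = 0 ∨ R a = 1)
    -- conditional law of the number of captures given `Z = z` is the one-inflated model
    (hD : ∀ k, P[{a | D a = k} | {a | Z a = z}] = ENNReal.ofReal (oneInflated f ω k))
    -- missing at random: `P(R = 1 ∣ Z = z, D = k) = π k`
    (hMAR : ∀ k, P ({a | Z a = z} ∩ {a | D a = k} ∩ {a | R a = 1})
        = ENNReal.ofReal (π k) * P ({a | Z a = z} ∩ {a | D a = k}))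
    (hf1 : 0 < f 1) (hφ : 0 < ∑' k, π (k + 1) * f (k + 1)) :
    (∫ a, (R a * (if 0 < D a then (1 : ℝ) else 0) * π 1 / (∑' k, π (k + 1) * f (k + 1))
          - R a * (if D a = 1 then (1 : ℝ) else 0) / f 1) ∂(P[|{a | Z a = z}]))
        = (1 - ω) * (1 - f 0) * π 1
            * (π 1 / (∑' k, π (k + 1) * f (k + 1)) - 1 / f 1) ∧
      (1 - ω) * (1 - f 0) * π 1
          * (π 1 / (∑' k, π (k + 1) * f (k + 1)) - 1 / f 1) ≤ 0 := by
  set φ := ∑' k, π (k + 1) * f (k + 1)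
  have hf0 : f 0 ≤ 1 := hftot ▸ hfsum.le_tsum 0 fun j _ => hf j
  have hπf : Summable fun k => π (k + 1) * f (k + 1) :=
    ((summable_nat_add_iff 1).mpr hfsum).of_nonneg_of_le (fun k => mul_nonneg (hπ _).1 (hf _))
      fun k => mul_le_of_le_one_left (hf _) (hπ _).2
  have hlaw : ∀ k, (P[|{a | Z a = z}]).real ({a | D a = k} ∩ {a | R a = 1})
      = π k * oneInflated f ω k := fun k => by
    rw [measureReal_def, cond_inter_eq_mul (measurableSet_eq_fun hDm measurable_const)
      (measurableSet_eq_fun hRm measurable_const) (hMAR k), hD k, ← ENNReal.ofReal_mul (hπ k).1,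
      ENNReal.toReal_ofReal (mul_nonneg (hπ k).1
        (oneInflated_nonneg hf hf0 (Set.Ioc_subset_Icc_self hω) k))]
  refine ⟨?_, ?_⟩
  · calc _ = ∫ a, R a * scoreWeight (π 1 / φ) (1 / f 1) (D a) ∂(P[|{a | Z a = z}]) := by
          congr with a
          simp only [scoreWeight]
          ring
      _ = ∑' k, π k * oneInflated f ω k * scoreWeight (π 1 / φ) (1 / f 1) k := by
          simp only [integral_mul_comp_eq_tsum hR01 hRm hDm (abs_scoreWeight_le _ _), hlaw]
      _ = (π 1 * ((1 - ω) * (1 - f 0)) + ω * φ) * (π 1 / φ)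
            - π 1 * oneInflated f ω 1 * (1 / f 1) :=
          tsum_mul_scoreWeight _ _ (hasSum_mul_oneInflated_succ ω hπf.hasSum)
      _ = _ := by
          simp only [oneInflated, one_ne_zero, if_false, if_true]
          field_simp
          ring
  · have hφ_ge : π 1 * f 1 ≤ φ := hπf.le_tsum 0 fun k _ => mul_nonneg (hπ _).1 (hf _)
    have hratio : π 1 / φ ≤ 1 / f 1 := by
      rwa [div_le_div_iff₀ hφ hf1, one_mul]
    exact mul_nonpos_of_nonneg_of_nonpos
      (mul_nonneg (mul_nonneg (by linarith [hω.2]) (by linarith)) (hπ 1).1) (by linarith)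

/-- Conditional expectation of the per-individual score contribution given the covariate
value `Z = z`.  Here `f` is the conditional pmf `f(·, z; β)` of the number of captures at the
fixed covariate value `z`, `π k = π(x, k)` is the non-missingness probability (`x` being the
fully observed part of `z`), `D` is the one-inflated number of captures and `R` the
missingness indicator. -/
theorem score_cond_expectation_given_z
    {Ω : Type*} [MeasurableSpace Ω] (P : Measure Ω) [IsProbabilityMeasure P]
    {ζ : Type*} (z : ζ)
    (f : ℕ → ℝ) (hf : ∀ k, 0 ≤ f k) (hfsum : Summable f) (hftot : ∑' k, f k = 1)
    (π : ℕ → ℝ) (hπ : ∀ k, π k ∈ Set.Icc (0 : ℝ) 1)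
    (ω : ℝ) (hω : ω ∈ Set.Ioc (0 : ℝ) 1)
    (Z : Ω → ζ) (D : Ω → ℕ) (R : Ω → ℝ)
    (hDm : Measurable D) (hRm : Measurable R)
    (hR01 : ∀ a, R a = 0 ∨ R a = 1)
    (hz : P {a | Z a = z} ≠ 0)
    -- conditional law of the number of captures given `Z = z` is the one-inflated model
    (hD : ∀ k, P[{a | D a = k} | {a | Z a = z}] = ENNReal.ofReal (oneInflated f ω k))
    -- missing at random: `P(R = 1 ∣ Z = z, D = k) = π k`
    (hMAR : ∀ k, P ({a | Z a = z} ∩ {a | D a = k} ∩ {a | R a = 1})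
        = ENNReal.ofReal (π k) * P ({a | Z a = z} ∩ {a | D a = k}))
    (hf1 : 0 < f 1) (hφ : 0 < ∑' k, π (k + 1) * f (k + 1)) :
    (∫ a, (R a * (if 0 < D a then (1 : ℝ) else 0) * π 1 / (∑' k, π (k + 1) * f (k + 1))
          - R a * (if D a = 1 then (1 : ℝ) else 0) / f 1) ∂(P[|{a | Z a = z}]))
        = (1 - ω) * (1 - f 0) * π 1
            * (π 1 / (∑' k, π (k + 1) * f (k + 1)) - 1 / f 1) ∧
      (1 - ω) * (1 - f 0) * π 1
          * (π 1 / (∑' k, π (k + 1) * f (k + 1)) - 1 / f 1) ≤ 0 :=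
  score_cond_expectation_given_z_general P z f hf hfsum hftot π hπ ω hω Z D R hDm hRm hR01 hD hMAR
    hf1 hφ
end

section
/- (Theorem 4(a), single-individual form.) Consider the Binomial regression model f(k, z; β₀) = C(K,k) g(z;β₀)^k (1−g(z;β₀))^{K−k} with K ≥ 2 capture occasions and logistic link g(z;β) = exp(βᵀz)/(1+exp(βᵀz)), the one-inflated model h(·,z;β₀,ω₀) with true inflation parameter ω₀ ∈ (0,1], and the logistic non-missingness model π(x,k;η₀) = exp((1,xᵀ,k)η₀)/(1+exp((1,xᵀ,k)η₀)). Let Z = (1, Xᵀ, Yᵀ)ᵀ be a random covariate, let D given Z = z have probability mass function h(·, z; β₀, ω₀), and let R satisfy P(R = 1 | X = x, Y = y, D = k) = π(x, k; η₀) (missing at random). Set φ(z; β₀, η₀) = Σ_{k=1}^∞ π(x,k;η₀) f(k,z;β₀). Then E[ R·I(D>0)·π(X,1;η₀)/φ(Z;β₀,η₀) − R·I(D=1)/f(1, Z; β₀) ] ≤ 0, with equality if and only if ω₀ = 1. -/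
open MeasureTheory ProbabilityTheory

/-- The standard logistic function. -/
noncomputable def logistic (t : ℝ) : ℝ := Real.exp t / (1 + Real.exp t)

/-- The logistic capture-probability link `g(z; β)`. -/
noncomputable def gLink {n : ℕ} (β z : Fin n → ℝ) : ℝ := logistic (∑ i, β i * z i)

/-- The Binomial regression model `f(k, z; β) = C(K,k) g(z;β)^k (1-g(z;β))^{K-k}`. -/
noncomputable def fBin {n : ℕ} (K : ℕ) (β z : Fin n → ℝ) (k : ℕ) : ℝ :=
  (K.choose k : ℝ) * gLink β z ^ k * (1 - gLink β z) ^ (K - k)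

/-- The logistic non-missingness model `π(x, k; η) = logit⁻¹((1, xᵀ, k) η)`. -/
noncomputable def piLog {p : ℕ} (η : Fin (p + 2) → ℝ) (x : Fin p → ℝ) (k : ℕ) : ℝ :=
  logistic (∑ j, η j * (Fin.cons (1 : ℝ) (Fin.snoc x (k : ℝ)) : Fin (p + 2) → ℝ) j)

/-!
Conditionally on the covariates `z = (1, x, y)`, the score of an individual is nonzero only when
`R = 1` and `D = k ≥ 1`, which happens with probability `h(k, z) π(x, k)`. Summing the score
against these weights, the inflated mass `(1 - ω)(1 - f(0, z))` placed at `k = 1` is the only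
part that does not cancel, and the conditional mean of the score is `(ω - 1)` times
`(1 - f(0, z)) π(x, 1) (1 / f(1, z) - π(x, 1) / φ(z))`, which is positive because, as `K ≥ 2`,
`φ(z)` also collects the term `π(x, 2) f(2, z) > 0`. Integrating over `z` gives the
sign, and equality forces `ω = 1`.
-/

lemma logistic_pos (t : ℝ) : 0 < logistic t := by unfold logistic; positivity

lemma logistic_lt_one (t : ℝ) : logistic t < 1 := by
  rw [logistic, div_lt_one (by positivity)]; linarith

@[fun_prop]
lemma continuous_logistic : Continuous logistic :=
  Real.continuous_exp.div (continuous_const.add Real.continuous_exp) fun _ => by positivity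

section Binomial

variable {n : ℕ} (K : ℕ) (β z : Fin n → ℝ)

lemma gLink_mem_Ioo : gLink β z ∈ Set.Ioo (0 : ℝ) 1 := ⟨logistic_pos _, logistic_lt_one _⟩

lemma fBin_nonneg (k : ℕ) : 0 ≤ fBin K β z k := by
  obtain ⟨h0, h1⟩ := gLink_mem_Ioo β z
  have := sub_pos.2 h1
  unfold fBin; positivity

lemma fBin_pos {k : ℕ} (hk : k ≤ K) : 0 < fBin K β z k := by
  obtain ⟨h0, h1⟩ := gLink_mem_Ioo β z
  have := sub_pos.2 h1
  have := Nat.choose_pos hk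
  unfold fBin; positivity

lemma fBin_eq_zero_of_lt {k : ℕ} (hk : K < k) : fBin K β z k = 0 := by
  simp [fBin, Nat.choose_eq_zero_of_lt hk]

lemma fBin_zero_lt_one (hK : 1 ≤ K) : fBin K β z 0 < 1 := by
  obtain ⟨h0, h1⟩ := gLink_mem_Ioo β z
  simpa [fBin] using pow_lt_one₀ (sub_pos.2 h1).le (sub_lt_self _ h0) (by omega : K ≠ 0)

lemma hasSum_fBin : HasSum (fBin K β z) 1 := by
  have hsum : ∑ k ∈ Finset.range (K + 1), fBin K β z k = 1 := by
    have binomial := add_pow (gLink β z) (1 - gLink β z) K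
    rw [add_sub_cancel, one_pow] at binomial
    exact binomial ▸ Finset.sum_congr rfl fun k _ => by unfold fBin; ring
  exact hsum ▸ hasSum_sum_of_ne_finset_zero fun k hk => fBin_eq_zero_of_lt K β z (by simpa using hk)

@[fun_prop]
lemma continuous_fBin (k : ℕ) : Continuous fun z : Fin n → ℝ => fBin K β z k := by
  unfold fBin gLink; fun_prop

end Binomial

lemma oneInflated_mem_Icc {f : ℕ → ℝ} (hf : ∀ k, 0 ≤ f k) (hsum : HasSum f 1) {ω : ℝ}
    (hω : ω ∈ Set.Icc (0 : ℝ) 1) (k : ℕ) : oneInflated f ω k ∈ Set.Icc (0 : ℝ) 1 := by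
  have hle (s : Finset ℕ) : ∑ i ∈ s, f i ≤ 1 := sum_le_hasSum s (fun i _ => hf i) hsum
  have h01 : f 0 + f 1 ≤ 1 := by simpa using hle {0, 1}
  have hk : f k ≤ 1 := by simpa using hle {k}
  obtain ⟨hω0, hω1⟩ := hω
  unfold oneInflated
  split_ifs <;> constructor <;> nlinarith [hf 0, hf 1, hf k]

lemma oneInflated_one (f : ℕ → ℝ) (ω : ℝ) :
    oneInflated f ω 1 = (1 - ω) * (1 - f 0) + ω * f 1 := rfl

lemma oneInflated_of_one_lt (f : ℕ → ℝ) (ω : ℝ) {k : ℕ} (hk : 1 < k) :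
    oneInflated f ω k = ω * f k := by
  simp [oneInflated, show k ≠ 0 by omega, show k ≠ 1 by omega]

@[fun_prop]
lemma continuous_oneInflated {γ : Type*} [TopologicalSpace γ] {f : γ → ℕ → ℝ}
    (hf : ∀ k, Continuous fun z => f z k) (ω : ℝ) (k : ℕ) :
    Continuous fun z => oneInflated (f z) ω k := by
  unfold oneInflated; split_ifs <;> fun_prop

lemma oneInflated_fBin_mem_Icc {n : ℕ} (K : ℕ) (β z : Fin n → ℝ) {ω : ℝ}
    (hω : ω ∈ Set.Icc (0 : ℝ) 1) (k : ℕ) : oneInflated (fBin K β z) ω k ∈ Set.Icc (0 : ℝ) 1 :=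
  oneInflated_mem_Icc (fBin_nonneg K β z) (hasSum_fBin K β z) hω k

lemma oneInflated_fBin_eq_zero_of_lt {n K : ℕ} (hK : 1 ≤ K) (β z : Fin n → ℝ) (ω : ℝ) {k : ℕ}
    (hk : K < k) : oneInflated (fBin K β z) ω k = 0 := by
  rw [oneInflated_of_one_lt _ _ (by omega), fBin_eq_zero_of_lt K β z hk, mul_zero]

section Score

variable {p n : ℕ} (K : ℕ) (β : Fin n → ℝ) (η : Fin (p + 2) → ℝ) (x : Fin p → ℝ) (z : Fin n → ℝ)

lemma piLog_pos (k : ℕ) : 0 < piLog η x k := logistic_pos _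

lemma piLog_lt_one (k : ℕ) : piLog η x k < 1 := logistic_lt_one _

@[fun_prop]
lemma continuous_piLog (k : ℕ) : Continuous fun x : Fin p → ℝ => piLog η x k := by
  unfold piLog; fun_prop

/-- The paper's `φ(z; β, η)`, with the `x`-block of `z` passed separately as `x`. -/
noncomputable def phi : ℝ := ∑' k, piLog η x (k + 1) * fBin K β z (k + 1)

lemma phi_eq_sum : phi K β η x z = ∑ k ∈ Finset.range K, piLog η x (k + 1) * fBin K β z (k + 1) :=
  tsum_eq_sum fun k hk => by
    rw [fBin_eq_zero_of_lt K β z (by simpa using hk), mul_zero]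

lemma mul_fBin_one_lt_phi (hK : 2 ≤ K) : piLog η x 1 * fBin K β z 1 < phi K β η x z := by
  obtain ⟨N, rfl⟩ := Nat.exists_eq_add_of_le' hK
  rw [phi_eq_sum, Finset.sum_range_succ', Finset.sum_range_succ', zero_add, lt_add_iff_pos_left]
  exact add_pos_of_nonneg_of_pos
    (Finset.sum_nonneg fun k _ => mul_nonneg (piLog_pos η x _).le (fBin_nonneg _ β z _))
    (mul_pos (piLog_pos η x 2) (fBin_pos _ β z (by omega)))

lemma phi_pos (hK : 2 ≤ K) : 0 < phi K β η x z :=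
  (mul_pos (piLog_pos η x 1) (fBin_pos K β z (by omega))).trans (mul_fBin_one_lt_phi K β η x z hK)

lemma continuous_phi : Continuous fun xz : (Fin p → ℝ) × (Fin n → ℝ) => phi K β η xz.1 xz.2 := by
  simp_rw [phi_eq_sum]; fun_prop

/-- The summand of the score statistic for an individual with `R = 1` and `D = k`. -/
noncomputable def score (k : ℕ) : ℝ :=
  (if 0 < k then (1 : ℝ) else 0) * piLog η x 1 / phi K β η x z
    - (if k = 1 then (1 : ℝ) else 0) / fBin K β z 1

lemma score_zero : score K β η x z 0 = 0 := by simp [score]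

lemma score_one : score K β η x z 1 = piLog η x 1 / phi K β η x z - 1 / fBin K β z 1 := by
  simp [score]

lemma score_of_one_lt {k : ℕ} (hk : 1 < k) :
    score K β η x z k = piLog η x 1 / phi K β η x z := by
  simp [score, show 0 < k by omega, show k ≠ 1 by omega]

@[fun_prop]
lemma measurable_score {γ : Type*} [MeasurableSpace γ] {ξ : γ → Fin p → ℝ} {ζ : γ → Fin n → ℝ}
    (hξ : Measurable ξ) (hζ : Measurable ζ) (k : ℕ) :
    Measurable fun c => score K β η (ξ c) (ζ c) k := by
  have := (continuous_phi K β η).measurable.comp (hξ.prodMk hζ)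
  unfold score; fun_prop

noncomputable def inflationSlope : ℝ :=
  (1 - fBin K β z 0) * piLog η x 1 * (1 / fBin K β z 1 - piLog η x 1 / phi K β η x z)

lemma inflationSlope_pos (hK : 2 ≤ K) : 0 < inflationSlope K β η x z := by
  have hf1 := fBin_pos K β z (by omega : 1 ≤ K)
  have hgap : piLog η x 1 / phi K β η x z < 1 / fBin K β z 1 := by
    rw [div_lt_div_iff₀ (phi_pos K β η x z hK) hf1, one_mul]
    exact mul_fBin_one_lt_phi K β η x z hK
  exact mul_pos
    (mul_pos (sub_pos.2 (fBin_zero_lt_one K β z (by omega))) (piLog_pos η x 1)) (sub_pos.2 hgap)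

lemma sum_oneInflated_mul_score (hK : 2 ≤ K) (ω : ℝ) :
    ∑ k ∈ Finset.range (K + 1), oneInflated (fBin K β z) ω k * piLog η x k * score K β η x z k
      = (ω - 1) * inflationSlope K β η x z := by
  obtain ⟨N, rfl⟩ := Nat.exists_eq_add_of_le' hK
  have hΦ := phi_pos _ β η x z hK
  have hf1 := fBin_pos (N + 2) β z (by omega : 1 ≤ N + 2)
  set S := ∑ k ∈ Finset.range (N + 1), piLog η x (k + 1 + 1) * fBin (N + 2) β z (k + 1 + 1)
  have hphi : phi (N + 2) β η x z = piLog η x 1 * fBin (N + 2) β z 1 + S := by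
    rw [phi_eq_sum, Finset.sum_range_succ', add_comm, zero_add]
  have htail : ∑ k ∈ Finset.range (N + 1), oneInflated (fBin (N + 2) β z) ω (k + 1 + 1)
        * piLog η x (k + 1 + 1) * score (N + 2) β η x z (k + 1 + 1)
      = ω * (piLog η x 1 / phi (N + 2) β η x z) * S := by
    rw [Finset.mul_sum]
    refine Finset.sum_congr rfl fun k _ => ?_
    rw [oneInflated_of_one_lt _ _ (by omega), score_of_one_lt _ _ _ _ _ (by omega)]
    ring
  rw [Finset.sum_range_succ', Finset.sum_range_succ', htail, zero_add, score_zero, score_one,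
    oneInflated_one, mul_zero, add_zero, inflationSlope]
  field_simp
  rw [hphi]
  ring

end Score

section Conditioning

variable {Ω γ : Type*} [MeasurableSpace Ω] [MeasurableSpace γ] {μ : Measure Ω} {Z : Ω → γ}

lemma map_restrict_eq_withDensity [IsFiniteMeasure μ] (hZ : Measurable Z) {ρ : γ → ℝ}
    (hρ : Measurable ρ) (hρ01 : ∀ z, ρ z ∈ Set.Icc (0 : ℝ) 1) {E : Set Ω}
    (h : ∀ S, MeasurableSet S → μ (E ∩ Z ⁻¹' S) = ENNReal.ofReal (∫ a in Z ⁻¹' S, ρ (Z a) ∂μ)) :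
    (μ.restrict E).map Z = (μ.map Z).withDensity fun z => ENNReal.ofReal (ρ z) := by
  ext S hS
  have hint : Integrable (fun a => ρ (Z a)) μ :=
    (integrable_const (1 : ℝ)).mono' (hρ.comp hZ).aestronglyMeasurable
      (Filter.Eventually.of_forall fun a => by
        simpa [abs_of_nonneg (hρ01 _).1] using (hρ01 (Z a)).2)
  rw [Measure.map_apply hZ hS, Measure.restrict_apply (hZ hS), Set.inter_comm, h S hS,
    withDensity_apply _ hS, setLIntegral_map hS hρ.ennreal_ofReal hZ,
    ofReal_integral_eq_lintegral_ofReal hint.integrableOn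
      (Filter.Eventually.of_forall fun a => (hρ01 _).1)]

lemma map_restrict_inter_eq_withDensity_mul [IsFiniteMeasure μ] (hZ : Measurable Z)
    {ρ₁ ρ₂ : γ → ℝ} (hρ₁ : Measurable ρ₁) (hρ₁01 : ∀ z, ρ₁ z ∈ Set.Icc (0 : ℝ) 1)
    (hρ₂ : Measurable ρ₂) (hρ₂01 : ∀ z, ρ₂ z ∈ Set.Icc (0 : ℝ) 1)
    {E F : Set Ω} (hF : MeasurableSet F)
    (h₁ : ∀ S, MeasurableSet S →
      μ (F ∩ Z ⁻¹' S) = ENNReal.ofReal (∫ a in Z ⁻¹' S, ρ₁ (Z a) ∂μ))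
    (h₂ : ∀ S, MeasurableSet S →
      μ (E ∩ F ∩ Z ⁻¹' S) = ENNReal.ofReal (∫ a in F ∩ Z ⁻¹' S, ρ₂ (Z a) ∂μ)) :
    (μ.restrict (E ∩ F)).map Z = (μ.map Z).withDensity fun z => ENNReal.ofReal (ρ₁ z * ρ₂ z) := by
  have hF' : (μ.restrict F).map Z = (μ.map Z).withDensity fun z => ENNReal.ofReal (ρ₁ z) :=
    map_restrict_eq_withDensity hZ hρ₁ hρ₁01 h₁
  have hE' : ((μ.restrict F).restrict E).map Z
      = ((μ.restrict F).map Z).withDensity fun z => ENNReal.ofReal (ρ₂ z) := by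
    refine map_restrict_eq_withDensity hZ hρ₂ hρ₂01 fun S hS => ?_
    rw [Measure.restrict_apply' hF, Measure.restrict_restrict (hZ hS), Set.inter_comm (Z ⁻¹' S) F,
      ← h₂ S hS, Set.inter_right_comm]
  simp_rw [ENNReal.ofReal_mul (hρ₁01 _).1]
  rw [← Measure.restrict_restrict' hF, hE', hF', ← withDensity_mul _
    hρ₁.ennreal_ofReal hρ₂.ennreal_ofReal]
  rfl

lemma integral_comp_eq_integral_mul_of_map_eq_withDensity {ν : Measure γ} (hZ : Measurable Z)
    {ρ : γ → ℝ} (hρ : Measurable ρ) (hρ0 : ∀ z, 0 ≤ ρ z)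
    (h : μ.map Z = ν.withDensity fun z => ENNReal.ofReal (ρ z)) {g : γ → ℝ} (hg : Measurable g) :
    ∫ a, g (Z a) ∂μ = ∫ z, ρ z * g z ∂ν := by
  rw [← integral_map hZ.aemeasurable hg.aestronglyMeasurable, h,
    integral_withDensity_eq_integral_toReal_smul hρ.ennreal_ofReal
      (Filter.Eventually.of_forall fun _ => ENNReal.ofReal_lt_top)]
  simp [ENNReal.toReal_ofReal (hρ0 _)]

lemma integrable_mul_of_map_eq_withDensity {ν : Measure γ} (hZ : Measurable Z)
    {ρ : γ → ℝ} (hρ : Measurable ρ) (hρ0 : ∀ z, 0 ≤ ρ z)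
    (h : μ.map Z = ν.withDensity fun z => ENNReal.ofReal (ρ z)) {g : γ → ℝ} (hg : Measurable g)
    (hint : Integrable (fun a => g (Z a)) μ) : Integrable (fun z => ρ z * g z) ν := by
  have hmap := (integrable_map_measure hg.aestronglyMeasurable hZ.aemeasurable).2 hint
  rw [h, integrable_withDensity_iff_integrable_smul' hρ.ennreal_ofReal
    (Filter.Eventually.of_forall fun _ => ENNReal.ofReal_lt_top)] at hmap
  simpa [ENNReal.toReal_ofReal (hρ0 _)] using hmap

lemma setIntegral_comp_eq_integral_sum_mul {E : Set Ω} (hE : MeasurableSet E) {D : Ω → ℕ}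
    (hD : Measurable D) (hZ : Measurable Z) {ρ : ℕ → γ → ℝ} (hρ : ∀ k, Measurable (ρ k))
    (hρ0 : ∀ k z, 0 ≤ ρ k z) {N : ℕ} (hρN : ∀ k, N < k → ρ k = 0)
    (hcond : ∀ k, (μ.restrict (E ∩ {a | D a = k})).map Z
      = (μ.map Z).withDensity fun z => ENNReal.ofReal (ρ k z))
    {s : ℕ → γ → ℝ} (hs : ∀ k, Measurable (s k))
    (hint : IntegrableOn (fun a => s (D a) (Z a)) E μ) :
    Integrable (fun z => ∑ k ∈ Finset.range (N + 1), ρ k z * s k z) (μ.map Z) ∧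
      ∫ a in E, s (D a) (Z a) ∂μ = ∫ z, ∑ k ∈ Finset.range (N + 1), ρ k z * s k z ∂(μ.map Z) := by
  have hEk (k : ℕ) : MeasurableSet (E ∩ {a | D a = k}) :=
    hE.inter (hD (measurableSet_singleton k))
  have hEqOn (k : ℕ) : Set.EqOn (fun a => s (D a) (Z a)) (fun a => s k (Z a)) (E ∩ {a | D a = k}) :=
    fun a ha => congrArg (s · (Z a)) ha.2
  have hintk (k : ℕ) : Integrable (fun z => ρ k z * s k z) (μ.map Z) :=
    integrable_mul_of_map_eq_withDensity hZ (hρ k) (hρ0 k) (hcond k) (hs k)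
      ((hint.mono_set Set.inter_subset_left).congr_fun (hEqOn k) (hEk k))
  have hunion : E = ⋃ k, E ∩ {a | D a = k} := by ext; simp
  have hdisj : Pairwise (Function.onFun Disjoint fun k => E ∩ {a | D a = k}) :=
    fun i j hij => Set.disjoint_left.2 fun a hi hj => hij (hi.2.symm.trans hj.2)
  refine ⟨integrable_finsetSum _ fun k _ => hintk k, ?_⟩
  calc ∫ a in E, s (D a) (Z a) ∂μ
      = ∑' k, ∫ a in E ∩ {a | D a = k}, s (D a) (Z a) ∂μ := by
        conv_lhs => rw [hunion]
        exact integral_iUnion hEk hdisj (hunion ▸ hint)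
    _ = ∑' k, ∫ z, ρ k z * s k z ∂(μ.map Z) := tsum_congr fun k => by
        rw [setIntegral_congr_fun (hEk k) (hEqOn k)]
        exact integral_comp_eq_integral_mul_of_map_eq_withDensity hZ (hρ k) (hρ0 k) (hcond k) (hs k)
    _ = ∑ k ∈ Finset.range (N + 1), ∫ z, ρ k z * s k z ∂(μ.map Z) :=
        tsum_eq_sum fun k hk => by simp [hρN k (by simpa [Nat.lt_succ_iff] using hk)]
    _ = ∫ z, ∑ k ∈ Finset.range (N + 1), ρ k z * s k z ∂(μ.map Z) :=
        (integral_finsetSum _ fun k _ => hintk k).symm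

lemma integral_const_mul_nonpos_and_eq_zero_iff {ν : Measure γ} [NeZero ν] {c : ℝ} (hc : c ≤ 0)
    {B : γ → ℝ} (hB : ∀ z, 0 < B z) (hint : Integrable (fun z => c * B z) ν) :
    ∫ z, c * B z ∂ν ≤ 0 ∧ (∫ z, c * B z ∂ν = 0 ↔ c = 0) := by
  have hle (z : γ) : c * B z ≤ 0 := mul_nonpos_of_nonpos_of_nonneg hc (hB z).le
  refine ⟨integral_nonpos hle, fun h0 => ?_, fun h => by simp [h]⟩
  have hneg : ∫ z, -(c * B z) ∂ν = 0 := by rw [integral_neg, h0, neg_zero]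
  obtain ⟨z, hz⟩ := ((integral_eq_zero_iff_of_nonneg (fun z => neg_nonneg.2 (hle z))
    hint.neg).1 hneg).exists
  exact (mul_eq_zero.1 (neg_eq_zero.1 hz)).resolve_right (hB z).ne'

end Conditioning

section Covariates

variable (p q : ℕ)

def covariates (xy : (Fin p → ℝ) × (Fin q → ℝ)) : Fin (p + q + 1) → ℝ :=
  Fin.cons 1 (Fin.append xy.1 xy.2)

def xPart (z : Fin (p + q + 1) → ℝ) : Fin p → ℝ := fun i => z (Fin.castAdd q i).succ

lemma xPart_covariates (x : Fin p → ℝ) (y : Fin q → ℝ) : xPart p q (covariates p q (x, y)) = x := by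
  funext i; simp [xPart, covariates, Fin.append_left]

@[fun_prop]
lemma measurable_covariates : Measurable (covariates p q) := by unfold covariates; fun_prop

@[fun_prop]
lemma measurable_xPart : Measurable (xPart p q) := by unfold xPart; fun_prop

end Covariates

/-- Theorem 4(a) of the paper, single-individual form: the expectation of the
score-like statistic is nonpositive, with equality iff `ω₀ = 1`. -/
theorem score_expectation_nonpos_iff_no_inflation
    {Ω : Type*} [MeasurableSpace Ω] (P : Measure Ω) [IsProbabilityMeasure P]
    (p q K : ℕ) (hK : 2 ≤ K)
    (β₀ : Fin (p + q + 1) → ℝ) (η₀ : Fin (p + 2) → ℝ)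
    (ω₀ : ℝ) (hω : ω₀ ∈ Set.Ioc (0 : ℝ) 1)
    (X : Ω → Fin p → ℝ) (Y : Ω → Fin q → ℝ) (D : Ω → ℕ) (R : Ω → ℝ)
    (Z : Ω → Fin (p + q + 1) → ℝ)
    (hZ : ∀ a, Z a = Fin.cons 1 (Fin.append (X a) (Y a)))
    (hR01 : ∀ a, R a = 0 ∨ R a = 1)
    (hXm : Measurable X) (hYm : Measurable Y) (hDm : Measurable D) (hRm : Measurable R)
    -- the conditional pmf of `D` given `Z = z` is the one-inflated Binomial model
    (hD : ∀ (k : ℕ) (S : Set (Fin (p + q + 1) → ℝ)), MeasurableSet S →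
      P ({a | D a = k} ∩ Z ⁻¹' S)
        = ENNReal.ofReal (∫ a in Z ⁻¹' S, oneInflated (fBin K β₀ (Z a)) ω₀ k ∂P))
    -- missing at random with the logistic non-missingness model
    (hMAR : ∀ (k : ℕ) (S : Set ((Fin p → ℝ) × (Fin q → ℝ))), MeasurableSet S →
      P ({a | R a = 1} ∩ {a | D a = k} ∩ {a | (X a, Y a) ∈ S})
        = ENNReal.ofReal (∫ a in {a | D a = k} ∩ {a | (X a, Y a) ∈ S},
            piLog η₀ (X a) k ∂P))
    (hInt : Integrable (fun a =>
      R a * (if 0 < D a then (1 : ℝ) else 0) * piLog η₀ (X a) 1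
          / (∑' k, piLog η₀ (X a) (k + 1) * fBin K β₀ (Z a) (k + 1))
        - R a * (if D a = 1 then (1 : ℝ) else 0) / fBin K β₀ (Z a) 1) P) :
    (∫ a, (R a * (if 0 < D a then (1 : ℝ) else 0) * piLog η₀ (X a) 1
          / (∑' k, piLog η₀ (X a) (k + 1) * fBin K β₀ (Z a) (k + 1))
        - R a * (if D a = 1 then (1 : ℝ) else 0) / fBin K β₀ (Z a) 1) ∂P) ≤ 0 ∧
      ((∫ a, (R a * (if 0 < D a then (1 : ℝ) else 0) * piLog η₀ (X a) 1
          / (∑' k, piLog η₀ (X a) (k + 1) * fBin K β₀ (Z a) (k + 1))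
        - R a * (if D a = 1 then (1 : ℝ) else 0) / fBin K β₀ (Z a) 1) ∂P) = 0
        ↔ ω₀ = 1) := by
  have hZ' : Z = fun a => covariates p q (X a, Y a) := funext hZ
  have hZm : Measurable Z := hZ' ▸ by fun_prop
  have hX (a : Ω) : X a = xPart p q (Z a) := by rw [hZ']; exact (xPart_covariates p q _ _).symm
  have hR : MeasurableSet {a | R a = 1} := hRm (measurableSet_singleton 1)
  have hωIcc : ω₀ ∈ Set.Icc (0 : ℝ) 1 := Set.Ioc_subset_Icc_self hω
  have hstatistic : (fun a => R a * (if 0 < D a then (1 : ℝ) else 0) * piLog η₀ (X a) 1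
          / (∑' k, piLog η₀ (X a) (k + 1) * fBin K β₀ (Z a) (k + 1))
        - R a * (if D a = 1 then (1 : ℝ) else 0) / fBin K β₀ (Z a) 1)
      = {a | R a = 1}.indicator fun a => score K β₀ η₀ (xPart p q (Z a)) (Z a) (D a) := by
    funext a; rcases hR01 a with h | h <;> simp [h, score, phi, hX a]
  rw [hstatistic, integrable_indicator_iff hR] at hInt
  rw [hstatistic, integral_indicator hR]
  have hcond (k : ℕ) : (P.restrict ({a | R a = 1} ∩ {a | D a = k})).map Z
      = (P.map Z).withDensity fun z =>
          ENNReal.ofReal (oneInflated (fBin K β₀ z) ω₀ k * piLog η₀ (xPart p q z) k) := by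
    refine map_restrict_inter_eq_withDensity_mul hZm (by fun_prop)
      (fun z => oneInflated_fBin_mem_Icc K β₀ z hωIcc k) (by fun_prop)
      (fun z => ⟨(piLog_pos η₀ _ k).le, (piLog_lt_one η₀ _ k).le⟩)
      (hDm (measurableSet_singleton k)) (hD k) fun S hS => ?_
    have hpre : Z ⁻¹' S = {a | (X a, Y a) ∈ covariates p q ⁻¹' S} := by rw [hZ']; rfl
    rw [hpre, hMAR k _ (measurable_covariates p q hS)]
    simp_rw [hX]
  obtain ⟨hint, heq⟩ := setIntegral_comp_eq_integral_sum_mul hR hDm hZm (by fun_prop)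
    (fun k z => mul_nonneg (oneInflated_fBin_mem_Icc K β₀ z hωIcc k).1 (piLog_pos η₀ _ k).le)
    (fun k hk => funext fun z => by
      rw [oneInflated_fBin_eq_zero_of_lt (by omega) β₀ z ω₀ hk, zero_mul, Pi.zero_apply])
    hcond (s := fun k z => score K β₀ η₀ (xPart p q z) z k) (by fun_prop) hInt
  simp only [sum_oneInflated_mul_score K β₀ η₀ _ _ hK ω₀] at hint heq
  have := Measure.isProbabilityMeasure_map (μ := P) hZm.aemeasurable
  simpa [heq, sub_eq_zero] using integral_const_mul_nonpos_and_eq_zero_iff (sub_nonpos.2 hω.2)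
    (fun z => inflationSlope_pos K β₀ η₀ (xPart p q z) z hK) hint
end

section
/- Let a₁, …, a_m be real numbers and suppose ξ ∈ ℝ satisfies 1 + ξ a_i > 0 for all i and Σ_{i=1}^m a_i/(1 + ξ a_i) = 0. Define p_i* = m⁻¹ (1 + ξ a_i)⁻¹. Then: (i) p_i* > 0 for all i, Σ_{i=1}^m p_i* = 1, and Σ_{i=1}^m p_i* a_i = 0; and (ii) for every vector (p₁, …, p_m) with p_i > 0, Σ_{i=1}^m p_i = 1, and Σ_{i=1}^m p_i a_i = 0, one has Σ_{i=1}^m log p_i ≤ Σ_{i=1}^m log p_i*, with equality if and only if p_i = p_i* for all i. -/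
/-!
Against the feasible weights `p`, the ratios `p i / p* i = m pᵢ (1 + ξ aᵢ)` sum to
`m (Σ pᵢ + ξ Σ pᵢ aᵢ) = m`, so `log x ≤ x - 1` (strict unless `x = 1`) applied to each ratio
gives `Σ log pᵢ - Σ log pᵢ* ≤ Σ (pᵢ / pᵢ* - 1) = 0`, with equality only when `p = p*`.
-/

open Finset Real

theorem log_sub_log_le_div_sub_one {x y : ℝ} (hx : 0 < x) (hy : 0 < y) :
    log x - log y ≤ x / y - 1 := by
  rw [← log_div hx.ne' hy.ne']
  exact log_le_sub_one_of_pos (div_pos hx hy)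

theorem log_sub_log_lt_div_sub_one {x y : ℝ} (hx : 0 < x) (hy : 0 < y) (hxy : x ≠ y) :
    log x - log y < x / y - 1 := by
  rw [← log_div hx.ne' hy.ne']
  exact log_lt_sub_one_of_pos (div_pos hx hy) fun h => hxy ((div_eq_one_iff_eq hy.ne').mp h)

theorem sum_log_le_sum_log_of_sum_div_le_card {ι : Type*} [Fintype ι] {p q : ι → ℝ}
    (hp : ∀ i, 0 < p i) (hq : ∀ i, 0 < q i)
    (hdiv : ∑ i, p i / q i ≤ Fintype.card ι) :
    ∑ i, log (p i) ≤ ∑ i, log (q i) ∧ (∑ i, log (p i) = ∑ i, log (q i) ↔ p = q) := by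
  have hslack : ∑ i, (p i / q i - 1) ≤ 0 := by simpa [sum_sub_distrib] using hdiv
  have hle : ∑ i, log (p i) - ∑ i, log (q i) ≤ ∑ i, (p i / q i - 1) := by
    rw [← sum_sub_distrib]
    exact sum_le_sum fun i _ => log_sub_log_le_div_sub_one (hp i) (hq i)
  refine ⟨by linarith, fun heq => ?_, fun hpq => by rw [hpq]⟩
  by_contra hpq
  obtain ⟨j, hj⟩ := Function.ne_iff.mp hpq
  have hlt : ∑ i, log (p i) - ∑ i, log (q i) < ∑ i, (p i / q i - 1) := by
    rw [← sum_sub_distrib]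
    exact sum_lt_sum (fun i _ => log_sub_log_le_div_sub_one (hp i) (hq i))
      ⟨j, mem_univ j, log_sub_log_lt_div_sub_one (hp j) (hq j) hj⟩
  linarith

theorem sum_inv_one_add_mul_eq_card {ι : Type*} [Fintype ι] {a : ι → ℝ} {ξ : ℝ}
    (hne : ∀ i, 1 + ξ * a i ≠ 0) (hroot : ∑ i, a i / (1 + ξ * a i) = 0) :
    ∑ i, (1 + ξ * a i)⁻¹ = Fintype.card ι := by
  have hinv : ∀ i, (1 + ξ * a i)⁻¹ = 1 - ξ * (a i / (1 + ξ * a i)) := fun i => by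
    field_simp [hne i]
    ring
  simp [hinv, sum_sub_distrib, ← mul_sum, hroot]

/-- The Lagrange-multiplier solution of the empirical-likelihood inner optimization:
`pᵢ* = m⁻¹ (1 + ξ aᵢ)⁻¹` are positive probability weights satisfying the moment
constraint, and they uniquely maximize `Σ log pᵢ` among all such weights. -/
theorem el_inner_optimization (m : ℕ) (hm : 0 < m) (a : Fin m → ℝ) (ξ : ℝ)
    (hpos : ∀ i, 0 < 1 + ξ * a i)
    (hroot : ∑ i, a i / (1 + ξ * a i) = 0) :
    (∀ i, 0 < (m : ℝ)⁻¹ * (1 + ξ * a i)⁻¹) ∧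
      (∑ i, (m : ℝ)⁻¹ * (1 + ξ * a i)⁻¹ = 1) ∧
      (∑ i, (m : ℝ)⁻¹ * (1 + ξ * a i)⁻¹ * a i = 0) ∧
      ∀ p : Fin m → ℝ, (∀ i, 0 < p i) → ∑ i, p i = 1 → ∑ i, p i * a i = 0 →
        (∑ i, Real.log (p i) ≤ ∑ i, Real.log ((m : ℝ)⁻¹ * (1 + ξ * a i)⁻¹)) ∧
          (∑ i, Real.log (p i) = ∑ i, Real.log ((m : ℝ)⁻¹ * (1 + ξ * a i)⁻¹)
            ↔ ∀ i, p i = (m : ℝ)⁻¹ * (1 + ξ * a i)⁻¹) := by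
  have hm_pos : (0 : ℝ) < m := Nat.cast_pos.mpr hm
  set q : Fin m → ℝ := fun i => (m : ℝ)⁻¹ * (1 + ξ * a i)⁻¹ with hq
  have hq_pos : ∀ i, 0 < q i := fun i => mul_pos (inv_pos.mpr hm_pos) (inv_pos.mpr (hpos i))
  have hq_sum : ∑ i, q i = 1 := by
    rw [← mul_sum, sum_inv_one_add_mul_eq_card (fun i => (hpos i).ne') hroot, Fintype.card_fin,
      inv_mul_cancel₀ hm_pos.ne']
  have hq_moment : ∑ i, q i * a i = 0 := by
    calc ∑ i, q i * a i = (m : ℝ)⁻¹ * ∑ i, a i / (1 + ξ * a i) := by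
          rw [mul_sum]
          exact sum_congr rfl fun i _ => by simp only [hq]; ring
      _ = 0 := by rw [hroot, mul_zero]
  refine ⟨hq_pos, hq_sum, hq_moment, fun p hp hp_sum hp_moment => ?_⟩
  have hratio : ∑ i, p i / q i = m := by
    calc ∑ i, p i / q i = m * (∑ i, p i + ξ * ∑ i, p i * a i) := by
          simp only [hq, div_eq_mul_inv, mul_inv, inv_inv, mul_sum, ← sum_add_distrib]
          exact sum_congr rfl fun i _ => by ring
      _ = m := by rw [hp_sum, hp_moment]; ring
  obtain ⟨hle, heq⟩ := sum_log_le_sum_log_of_sum_div_le_card hp hq_pos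
    (by rw [hratio, Fintype.card_fin])
  exact ⟨hle, heq.trans funext_iff⟩
end

section
/- Let a₁, …, a_m be real numbers with min_i a_i < 0 < max_i a_i. Then there exists a unique ξ in the open interval (−1/max_i a_i, −1/min_i a_i) such that 1 + ξ a_i > 0 for all i and Σ_{i=1}^m a_i/(1 + ξ a_i) = 0; moreover, the function ξ ↦ Σ_{i=1}^m a_i/(1 + ξ a_i) is strictly decreasing on this interval and tends to +∞ and −∞ at its left and right endpoints, respectively. -/
open Filter

private lemma auxM {M ξ : ℝ} (hM : 0 < M) (h : -1/M < ξ) : 0 < 1 + ξ * M := by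
  have h' := mul_lt_mul_of_pos_right h hM
  have : -1/M * M = -1 := div_mul_cancel₀ (-1) hM.ne'
  linarith

private lemma auxL {L ξ : ℝ} (hL : L < 0) (h : ξ < -1/L) : 0 < 1 + ξ * L := by
  have h' := mul_lt_mul_of_neg_right h hL
  have : -1/L * L = -1 := div_mul_cancel₀ (-1) hL.ne
  linarith

private lemma denom_pos {M L ξ x : ℝ} (hMpos : 0 < M) (hLneg : L < 0)
    (haM : x ≤ M) (haL : L ≤ x) (h1 : -1/M < ξ) (h2 : ξ < -1/L) :
    0 < 1 + ξ * x := by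
  have hM1 := auxM hMpos h1
  have hL1 := auxL hLneg h2
  rcases le_or_gt 0 ξ with hx | hx
  · nlinarith [mul_nonneg hx (sub_nonneg.2 haL)]
  · nlinarith [mul_nonneg (neg_nonneg.2 hx.le) (sub_nonneg.2 haM)]

/-- Existence and uniqueness of the empirical-likelihood Lagrange multiplier `ξ`:
if `min aᵢ < 0 < max aᵢ` then there is a unique `ξ ∈ (−1/max aᵢ, −1/min aᵢ)` with
`1 + ξ aᵢ > 0` for all `i` and `Σ aᵢ/(1 + ξ aᵢ) = 0`; moreover `ξ ↦ Σ aᵢ/(1 + ξ aᵢ)`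
is strictly decreasing on this interval and tends to `+∞` and `−∞` at its endpoints. -/
theorem lagrange_multiplier_exists_unique (m : ℕ) (hm : 0 < m) (a : Fin m → ℝ)
    (M L : ℝ) (hM : IsGreatest (Set.range a) M) (hL : IsLeast (Set.range a) L)
    (hMpos : 0 < M) (hLneg : L < 0) :
    (∃! ξ : ℝ, ξ ∈ Set.Ioo (-1 / M) (-1 / L) ∧
        (∀ i, 0 < 1 + ξ * a i) ∧ ∑ i, a i / (1 + ξ * a i) = 0) ∧
      StrictAntiOn (fun ξ : ℝ => ∑ i, a i / (1 + ξ * a i)) (Set.Ioo (-1 / M) (-1 / L)) ∧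
      Tendsto (fun ξ : ℝ => ∑ i, a i / (1 + ξ * a i))
        (nhdsWithin (-1 / M) (Set.Ioi (-1 / M))) atTop ∧
      Tendsto (fun ξ : ℝ => ∑ i, a i / (1 + ξ * a i))
        (nhdsWithin (-1 / L) (Set.Iio (-1 / L))) atBot := by
  obtain ⟨i0, hi0⟩ := hM.1
  obtain ⟨i1, hi1⟩ := hL.1
  have haM : ∀ i, a i ≤ M := fun i => hM.2 ⟨i, rfl⟩
  have haL : ∀ i, L ≤ a i := fun i => hL.2 ⟨i, rfl⟩
  set f : ℝ → ℝ := fun ξ => ∑ i, a i / (1 + ξ * a i) with hf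
  have h0M : -1/M < 0 := div_neg_of_neg_of_pos (by norm_num) hMpos
  have h0L : (0:ℝ) < -1/L := by
    have : 1/L < 0 := one_div_neg.mpr hLneg
    rw [neg_div]; linarith
  have hML : -1/M < -1/L := h0M.trans h0L
  have hepos : ∀ ξ ∈ Set.Ioo (-1/M) (-1/L), ∀ i, 0 < 1 + ξ * a i :=
    fun ξ hξ i => denom_pos hMpos hLneg (haM i) (haL i) hξ.1 hξ.2
  -- strict antitonicity
  have hanti : StrictAntiOn f (Set.Ioo (-1/M) (-1/L)) := by
    intro x hx y hy hxy
    apply Finset.sum_lt_sum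
    · intro i _
      have hdx := hepos x hx i
      have hdy := hepos y hy i
      rw [div_le_div_iff₀ hdy hdx]
      nlinarith [mul_nonneg (sq_nonneg (a i)) (sub_nonneg.2 hxy.le)]
    · refine ⟨i0, Finset.mem_univ _, ?_⟩
      have hdx := hepos x hx i0
      have hdy := hepos y hy i0
      rw [div_lt_div_iff₀ hdy hdx]
      have hpos : 0 < a i0 := hi0 ▸ hMpos
      nlinarith [mul_pos (mul_pos hpos hpos) (sub_pos.2 hxy)]
  -- continuity
  have hcont : ContinuousOn f (Set.Ioo (-1/M) (-1/L)) := by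
    apply continuousOn_finset_sum
    intro i _
    exact ContinuousOn.div continuousOn_const
      ((continuous_const.add (continuous_id.mul continuous_const)).continuousOn)
      (fun x hx => (hepos x hx i).ne')
  -- tendsto atTop at left endpoint
  have hdenomM : Tendsto (fun ξ : ℝ => 1 + ξ * M) (nhdsWithin (-1/M) (Set.Ioi (-1/M)))
      (nhdsWithin 0 (Set.Ioi 0)) := by
    rw [tendsto_nhdsWithin_iff]
    constructor
    · have hc : Tendsto (fun ξ : ℝ => 1 + ξ * M) (nhds (-1/M)) (nhds (1 + (-1/M) * M)) :=
        (continuous_const.add (continuous_id.mul continuous_const)).tendsto _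
      have : 1 + (-1/M) * M = 0 := by rw [div_mul_cancel₀ (-1) hMpos.ne']; ring
      rw [this] at hc
      exact hc.mono_left nhdsWithin_le_nhds
    · filter_upwards [self_mem_nhdsWithin] with ξ hξ
      exact auxM hMpos hξ
  have htop : Tendsto (fun ξ : ℝ => M / (1 + ξ * M)) (nhdsWithin (-1/M) (Set.Ioi (-1/M))) atTop := by
    have h1 := tendsto_inv_nhdsGT_zero.comp hdenomM
    have h2 := h1.const_mul_atTop hMpos
    simpa [div_eq_mul_inv, Function.comp] using h2
  have hTop : Tendsto f (nhdsWithin (-1/M) (Set.Ioi (-1/M))) atTop := by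
    have hmem : Set.Ioo (-1/M) (0:ℝ) ∈ nhdsWithin (-1/M) (Set.Ioi (-1/M)) :=
      Ioo_mem_nhdsGT_of_mem ⟨le_refl _, h0M⟩
    have hbound : ∀ᶠ ξ in nhdsWithin (-1/M) (Set.Ioi (-1/M)),
        ((Finset.univ.erase i0).card : ℝ) * L + M / (1 + ξ * M) ≤ f ξ := by
      filter_upwards [hmem] with ξ hξ
      have hξI : ξ ∈ Set.Ioo (-1/M) (-1/L) := ⟨hξ.1, hξ.2.trans h0L⟩
      have hsplit : f ξ = a i0 / (1 + ξ * a i0) + ∑ i ∈ Finset.univ.erase i0, a i / (1 + ξ * a i) :=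
        (Finset.add_sum_erase _ _ (Finset.mem_univ i0)).symm
      have hterm : ∀ i ∈ Finset.univ.erase i0, L ≤ a i / (1 + ξ * a i) := by
        intro i _
        have hd := hepos ξ hξI i
        rcases le_or_gt (a i) 0 with h | h
        · have hd1 : 1 ≤ 1 + ξ * a i := by nlinarith [mul_nonneg (neg_nonneg.2 hξ.2.le) (neg_nonneg.2 h)]
          have : a i ≤ a i / (1 + ξ * a i) := by
            rw [le_div_iff₀ hd]; nlinarith
          linarith [haL i]
        · exact le_trans hLneg.le (div_pos h hd).le
      have hsum : ∑ i ∈ Finset.univ.erase i0, L ≤ ∑ i ∈ Finset.univ.erase i0, a i / (1 + ξ * a i) :=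
        Finset.sum_le_sum hterm
      rw [Finset.sum_const, nsmul_eq_mul] at hsum
      rw [hsplit, hi0]
      linarith
    exact tendsto_atTop_mono' _ hbound (tendsto_atTop_add_const_left _ _ htop)
  -- tendsto atBot at right endpoint
  have hdenomL : Tendsto (fun ξ : ℝ => 1 + ξ * L) (nhdsWithin (-1/L) (Set.Iio (-1/L)))
      (nhdsWithin 0 (Set.Ioi 0)) := by
    rw [tendsto_nhdsWithin_iff]
    constructor
    · have hc : Tendsto (fun ξ : ℝ => 1 + ξ * L) (nhds (-1/L)) (nhds (1 + (-1/L) * L)) :=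
        (continuous_const.add (continuous_id.mul continuous_const)).tendsto _
      have : 1 + (-1/L) * L = 0 := by rw [div_mul_cancel₀ (-1) hLneg.ne]; ring
      rw [this] at hc
      exact hc.mono_left nhdsWithin_le_nhds
    · filter_upwards [self_mem_nhdsWithin] with ξ hξ
      exact auxL hLneg hξ
  have hbot : Tendsto (fun ξ : ℝ => L / (1 + ξ * L)) (nhdsWithin (-1/L) (Set.Iio (-1/L))) atBot := by
    have h1 := tendsto_inv_nhdsGT_zero.comp hdenomL
    have h2 := (tendsto_const_mul_atBot_of_neg hLneg).mpr h1
    simpa [div_eq_mul_inv, Function.comp] using h2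
  have hBot : Tendsto f (nhdsWithin (-1/L) (Set.Iio (-1/L))) atBot := by
    have hmem : Set.Ioo (0:ℝ) (-1/L) ∈ nhdsWithin (-1/L) (Set.Iio (-1/L)) :=
      Ioo_mem_nhdsLT_of_mem ⟨h0L, le_refl _⟩
    have hbound : ∀ᶠ ξ in nhdsWithin (-1/L) (Set.Iio (-1/L)),
        f ξ ≤ ((Finset.univ.erase i1).card : ℝ) * M + L / (1 + ξ * L) := by
      filter_upwards [hmem] with ξ hξ
      have hξI : ξ ∈ Set.Ioo (-1/M) (-1/L) := ⟨h0M.trans hξ.1, hξ.2⟩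
      have hsplit : f ξ = a i1 / (1 + ξ * a i1) + ∑ i ∈ Finset.univ.erase i1, a i / (1 + ξ * a i) :=
        (Finset.add_sum_erase _ _ (Finset.mem_univ i1)).symm
      have hterm : ∀ i ∈ Finset.univ.erase i1, a i / (1 + ξ * a i) ≤ M := by
        intro i _
        have hd := hepos ξ hξI i
        rcases le_or_gt 0 (a i) with h | h
        · have hd1 : 1 ≤ 1 + ξ * a i := by nlinarith [mul_nonneg hξ.1.le h]
          have : a i / (1 + ξ * a i) ≤ a i := by
            rw [div_le_iff₀ hd]; nlinarith
          linarith [haM i]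
        · exact le_trans (div_neg_of_neg_of_pos h hd).le hMpos.le
      have hsum : ∑ i ∈ Finset.univ.erase i1, a i / (1 + ξ * a i) ≤ ∑ i ∈ Finset.univ.erase i1, M :=
        Finset.sum_le_sum hterm
      rw [Finset.sum_const, nsmul_eq_mul] at hsum
      rw [hsplit, hi1]
      linarith
    exact tendsto_atBot_mono' _ hbound (tendsto_atBot_add_const_left _ _ hbot)
  -- existence
  have hmemI1 : Set.Ioo (-1/M) (-1/L) ∈ nhdsWithin (-1/M) (Set.Ioi (-1/M)) :=
    Ioo_mem_nhdsGT_of_mem ⟨le_refl _, hML⟩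
  have hmemI2 : Set.Ioo (-1/M) (-1/L) ∈ nhdsWithin (-1/L) (Set.Iio (-1/L)) :=
    Ioo_mem_nhdsLT_of_mem ⟨hML, le_refl _⟩
  obtain ⟨ξ₁, hfξ₁, hξ₁I⟩ := ((hTop.eventually_gt_atTop 0).and (eventually_of_mem hmemI1 (fun x hx => hx))).exists
  obtain ⟨ξ₂, hfξ₂, hξ₂I⟩ := ((hBot.eventually_lt_atBot 0).and (eventually_of_mem hmemI2 (fun x hx => hx))).exists
  have hξ12 : ξ₁ < ξ₂ := by
    rcases lt_trichotomy ξ₁ ξ₂ with h | h | h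
    · exact h
    · exfalso; rw [h] at hfξ₁; linarith
    · exfalso; have := hanti hξ₂I hξ₁I h; linarith
  obtain ⟨ξ, hξmem, hξ0⟩ := intermediate_value_Icc' hξ12.le
    (hcont.mono (Set.Icc_subset_Ioo hξ₁I.1 hξ₂I.2)) ⟨hfξ₂.le, hfξ₁.le⟩
  have hξI : ξ ∈ Set.Ioo (-1/M) (-1/L) :=
    ⟨lt_of_lt_of_le hξ₁I.1 hξmem.1, lt_of_le_of_lt hξmem.2 hξ₂I.2⟩
  refine ⟨⟨ξ, ⟨hξI, hepos ξ hξI, hξ0⟩, ?_⟩, hanti, hTop, hBot⟩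
  rintro y ⟨hyI, -, hy0⟩
  exact hanti.injOn hyI hξI (hy0.trans hξ0.symm)
end
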